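/- Let $p$ be a subharmonic nonharmonic polynomial of degree $d$, and let $\mathcal{Y}$ be any one of the vector fields $L_z, \bar L_z, \mathcal{L}_w, \bar{\mathcal{L}}_w$. Then there is a constant $C$ depending only on $d$ such that $|\mathcal{Y}(t + T(w,z))| \le C\,\Lambda(z, d_{NI}(z,w,t))/d_{NI}(z,w,t)$ for all $z \ne w$ and $t \in \mathbb{R}$. -/

import Mathlib

/-!
Put `F(w,z) = ∑_{j≥1} A_{j0}(z) (w-z)^j`, so that `t + T(w,z) = t + i F - i F̄` and the Wirtinger
derivatives of `t + T` are read off from those of `F`. In `z`, the `∂_z`-derivatives of the terms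
of `F` telescope to `-A_{10}(z)`, while `∂_{z̄} F = ∑_{j≥1} A_{j1}(z) (w-z)^j`. In `w`, `F` is
holomorphic, and `A_{10}(w)` is expanded about `z` by differentiating the Taylor expansion
`p(z + X) = ∑_{j,k} A_{jk}(z) X^j X̄^k` in `X`. As `p` is real, `A_{01} = conj A_{10}`, so in all
four cases the terms `± i A_{10}`, `± i A_{01}` cancel. What remains is a sum, over `j, k ≥ 1`, of
`A_{jk}(z)` times a monomial of degree `j + k - 1` in `w - z` and its conjugate with coefficient
at most `d`, hence is at most `d Λ(z,δ)/δ` once `|w - z| ≤ δ = d_{NI}(z,w,t)`.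
-/

open Finset Complex

/-- The coefficient `A_{jk}(z) = (1/(j!k!)) ∂^{j+k}p/∂z^j∂z̄^k (z)` of the
polynomial `p(z) = ∑_{m,n ≤ d} a m n · z^m · z̄^n`. -/
noncomputable def Acoef (d : ℕ) (a : ℕ → ℕ → ℂ) (j k : ℕ) (z : ℂ) : ℂ :=
  ∑ m ∈ Finset.range (d + 1), ∑ n ∈ Finset.range (d + 1),
    (m.choose j : ℂ) * (n.choose k : ℂ) * a m n * z ^ (m - j) * (starRingEnd ℂ z) ^ (n - k)

/-- The twist `T(w,z) = -2 Im (∑_{j≥1} (1/j!) ∂^j p/∂z^j (z) (w-z)^j)`. -/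
noncomputable def Twist (d : ℕ) (a : ℕ → ℕ → ℂ) (w z : ℂ) : ℝ :=
  -2 * (∑ j ∈ Finset.Icc 1 d, Acoef d a j 0 z * (w - z) ^ j).im

/-- `Λ(z,δ) = ∑_{j,k ≥ 1} |A_{jk}(z)| δ^{j+k}`. -/
noncomputable def Lam (d : ℕ) (a : ℕ → ℕ → ℂ) (z : ℂ) (δ : ℝ) : ℝ :=
  ∑ j ∈ Finset.Icc 1 d, ∑ k ∈ Finset.Icc 1 d,
    Norm.norm (Acoef d a j k z) * δ ^ (j + k)

/-- `μ(z,δ) = inf_{j,k ≥ 1, A_{jk}(z) ≠ 0} (|δ|/|A_{jk}(z)|)^{1/(j+k)}`. -/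
noncomputable def muF (d : ℕ) (a : ℕ → ℕ → ℂ) (z : ℂ) (δ : ℝ) : ℝ :=
  sInf {x : ℝ | ∃ j k : ℕ, 1 ≤ j ∧ 1 ≤ k ∧ Acoef d a j k z ≠ 0 ∧
    x = (|δ| / Norm.norm (Acoef d a j k z)) ^ (1 / ((j : ℝ) + (k : ℝ)))}

/-- The Wirtinger derivative `∂f/∂z = (1/2)(∂f/∂x - i ∂f/∂y)`. -/
noncomputable def wDz (f : ℂ → ℂ) (z : ℂ) : ℂ :=
  (fderiv ℝ f z 1 - Complex.I * fderiv ℝ f z Complex.I) / 2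

/-- The Wirtinger derivative `∂f/∂z̄ = (1/2)(∂f/∂x + i ∂f/∂y)`. -/
noncomputable def wDzbar (f : ℂ → ℂ) (z : ℂ) : ℂ :=
  (fderiv ℝ f z 1 + Complex.I * fderiv ℝ f z Complex.I) / 2

/-- The nonisotropic pseudodistance `d_{NI}(z,w,t) = |z-w| + μ(z, t+T(w,z))`. -/
noncomputable def dNI (d : ℕ) (a : ℕ → ℕ → ℂ) (z w : ℂ) (t : ℝ) : ℝ :=
  Norm.norm (z - w) + muF d a z (t + Twist d a w z)

/-- `f` has this derivative at `z` exactly when `∂f/∂z = α` and `∂f/∂z̄ = β` there. -/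
noncomputable def wirtingerCLM (α β : ℂ) : ℂ →L[ℝ] ℂ :=
  α • ContinuousLinearMap.id ℝ ℂ + β • Complex.conjCLE.toContinuousLinearMap

section Wirtinger

variable {f g : ℂ → ℂ} {α β γ δ z : ℂ}

@[simp]
lemma wirtingerCLM_apply (α β v : ℂ) : wirtingerCLM α β v = α * v + β * starRingEnd ℂ v := by
  simp [wirtingerCLM]

lemma wirtingerCLM_sum {ι : Type*} (s : Finset ι) (α β : ι → ℂ) :
    ∑ i ∈ s, wirtingerCLM (α i) (β i) = wirtingerCLM (∑ i ∈ s, α i) (∑ i ∈ s, β i) := by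
  ext v; simp [Finset.sum_mul, Finset.sum_add_distrib]

lemma wDz_eq_of_hasFDerivAt (h : HasFDerivAt f (wirtingerCLM α β) z) : wDz f z = α := by
  rw [wDz, h.fderiv]
  simp only [wirtingerCLM_apply, map_one, conj_I]
  ring_nf
  simp [I_sq]
  ring

lemma wDzbar_eq_of_hasFDerivAt (h : HasFDerivAt f (wirtingerCLM α β) z) : wDzbar f z = β := by
  rw [wDzbar, h.fderiv]
  simp only [wirtingerCLM_apply, map_one, conj_I]
  ring_nf
  simp [I_sq]
  ring

lemma HasDerivAt.hasFDerivAt_wirtingerCLM {f' : ℂ} (h : HasDerivAt f f' z) :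
    HasFDerivAt f (wirtingerCLM f' 0) z :=
  (h.hasFDerivAt.restrictScalars ℝ).congr_fderiv (by ext v; simp [mul_comm])

lemma HasFDerivAt.conj_wirtingerCLM (h : HasFDerivAt f (wirtingerCLM α β) z) :
    HasFDerivAt (fun ζ => starRingEnd ℂ (f ζ)) (wirtingerCLM (starRingEnd ℂ β) (starRingEnd ℂ α)) z :=
  h.star.congr_fderiv (by ext v; simp [add_comm])

lemma HasFDerivAt.mul_wirtingerCLM (hf : HasFDerivAt f (wirtingerCLM α β) z)
    (hg : HasFDerivAt g (wirtingerCLM γ δ) z) :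
    HasFDerivAt (fun ζ => f ζ * g ζ) (wirtingerCLM (f z * γ + g z * α) (f z * δ + g z * β)) z :=
  (hf.mul hg).congr_fderiv (by ext v; simp; ring)

lemma HasFDerivAt.ofReal_add_neg_two_mul_im (t : ℝ) (h : HasFDerivAt f (wirtingerCLM α β) z) :
    HasFDerivAt (fun ζ => ((t + -2 * (f ζ).im : ℝ) : ℂ))
      (wirtingerCLM (I * (α - starRingEnd ℂ β)) (I * (β - starRingEnd ℂ α))) z := by
  have hfun : (fun ζ => ((t + -2 * (f ζ).im : ℝ) : ℂ))
      = fun ζ => (t : ℂ) + I * (f ζ - starRingEnd ℂ (f ζ)) := by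
    funext ζ
    apply Complex.ext <;> simp
    ring
  rw [hfun]
  exact ((h.sub h.conj_wirtingerCLM).const_mul I).const_add _ |>.congr_fderiv
    (by ext v; simp; ring)

end Wirtinger

lemma sum_range_choose_mul_pow_mul_pow {R : Type*} [CommSemiring R] {n d : ℕ} (hn : n ≤ d)
    (x y : R) : ∑ j ∈ range (d + 1), (n.choose j : R) * x ^ (n - j) * y ^ j = (x + y) ^ n := by
  rw [add_comm x y, add_pow, sum_subset (range_subset_range.2 (by omega : n + 1 ≤ d + 1))]
  · exact sum_congr rfl fun j _ => by ring
  · intro j _ hj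
    rw [Nat.choose_eq_zero_of_lt (by simpa using hj)]
    simp

lemma sum_range_succ_eq_add_sum_Icc {M : Type*} [AddCommMonoid M] (f : ℕ → M) (n : ℕ) :
    ∑ k ∈ range (n + 1), f k = f 0 + ∑ k ∈ Icc 1 n, f k := by
  rw [range_eq_Ico, sum_eq_sum_Ico_succ_bot (by omega), zero_add, Ico_add_one_right_eq_Icc]

lemma deriv_ofReal_add_const (c t : ℝ) : deriv (fun s : ℝ => ((s + c : ℝ) : ℂ)) t = 1 := by
  simpa using ((hasDerivAt_id' t).add_const c).ofReal_comp.deriv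

lemma hasFDerivAt_monomial (c : ℂ) (m n : ℕ) (z : ℂ) :
    HasFDerivAt (fun ζ : ℂ => c * ζ ^ m * starRingEnd ℂ ζ ^ n)
      (wirtingerCLM (c * m * z ^ (m - 1) * starRingEnd ℂ z ^ n)
        (c * n * z ^ m * starRingEnd ℂ z ^ (n - 1))) z := by
  have hm := ((hasDerivAt_pow m z).const_mul c).hasFDerivAt_wirtingerCLM
  have hn := (hasDerivAt_pow n z).hasFDerivAt_wirtingerCLM.conj_wirtingerCLM
  simp only [← map_pow] at hn ⊢
  convert hm.mul_wirtingerCLM hn using 2 <;> simp <;> ring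

section Acoef

variable (d : ℕ) (a : ℕ → ℕ → ℂ)

lemma natCast_choose_mul_sub (m j : ℕ) :
    (m.choose j : ℂ) * ((m - j : ℕ) : ℂ) = ((j : ℂ) + 1) * (m.choose (j + 1) : ℂ) := by
  rw [mul_comm ((j : ℂ) + 1)]
  exact_mod_cast (Nat.choose_succ_right_eq m j).symm

lemma hasFDerivAt_Acoef (j k : ℕ) (z : ℂ) :
    HasFDerivAt (fun ζ => Acoef d a j k ζ)
      (wirtingerCLM (((j : ℂ) + 1) * Acoef d a (j + 1) k z)
        (((k : ℂ) + 1) * Acoef d a j (k + 1) z)) z := by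
  have h := HasFDerivAt.fun_sum fun m (_ : m ∈ range (d + 1)) =>
    HasFDerivAt.fun_sum fun n (_ : n ∈ range (d + 1)) =>
      hasFDerivAt_monomial ((m.choose j : ℂ) * (n.choose k : ℂ) * a m n) (m - j) (n - k) z
  simp only [wirtingerCLM_sum] at h
  refine h.congr_fderiv (congrArg₂ _ ?_ ?_) <;> simp only [Acoef, mul_sum] <;>
    refine sum_congr rfl fun m _ => sum_congr rfl fun n _ => ?_ <;> rw [Nat.sub_sub]
  · linear_combination (n.choose k : ℂ) * a m n * z ^ (m - (j + 1)) *
      starRingEnd ℂ z ^ (n - k) * natCast_choose_mul_sub m j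
  · linear_combination (m.choose j : ℂ) * a m n * z ^ (m - j) *
      starRingEnd ℂ z ^ (n - (k + 1)) * natCast_choose_mul_sub n k

lemma conj_Acoef (hsym : ∀ m n, starRingEnd ℂ (a m n) = a n m) (j k : ℕ) (z : ℂ) :
    starRingEnd ℂ (Acoef d a j k z) = Acoef d a k j z := by
  simp only [Acoef, map_sum, map_mul, map_pow, conj_conj, map_natCast, hsym]
  rw [sum_comm]
  exact sum_congr rfl fun _ _ => sum_congr rfl fun _ _ => by ring

lemma Acoef_eq_zero_of_lt {j : ℕ} (hj : d < j) (k : ℕ) (z : ℂ) : Acoef d a j k z = 0 :=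
  sum_eq_zero fun m hm => sum_eq_zero fun n _ => by
    rw [Nat.choose_eq_zero_of_lt (by rw [mem_range] at hm; omega)]
    simp

lemma Acoef_zero_zero_add (z X : ℂ) :
    Acoef d a 0 0 (z + X) = ∑ j ∈ range (d + 1), ∑ k ∈ range (d + 1),
      Acoef d a j k z * X ^ j * starRingEnd ℂ X ^ k := by
  have hbin : ∀ m ∈ range (d + 1), ∀ x y : ℂ, (x + y) ^ m =
      ∑ j ∈ range (d + 1), (m.choose j : ℂ) * x ^ (m - j) * y ^ j := fun m hm x y =>
    (sum_range_choose_mul_pow_mul_pow (Nat.lt_succ_iff.1 (mem_range.1 hm)) x y).symm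
  simp only [Acoef, Nat.choose_zero_right, Nat.sub_zero, Nat.cast_one, one_mul, map_add]
  calc ∑ m ∈ range (d + 1), ∑ n ∈ range (d + 1),
        a m n * (z + X) ^ m * (starRingEnd ℂ z + starRingEnd ℂ X) ^ n
      = ∑ mn ∈ range (d + 1) ×ˢ range (d + 1), ∑ jk ∈ range (d + 1) ×ˢ range (d + 1),
          (mn.1.choose jk.1 : ℂ) * (mn.2.choose jk.2 : ℂ) * a mn.1 mn.2 * z ^ (mn.1 - jk.1) *
            starRingEnd ℂ z ^ (mn.2 - jk.2) * X ^ jk.1 * starRingEnd ℂ X ^ jk.2 := by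
        rw [sum_product]
        refine sum_congr rfl fun m hm => sum_congr rfl fun n hn => ?_
        rw [hbin m hm, hbin n hn, mul_assoc, sum_mul_sum, mul_sum, sum_product]
        exact sum_congr rfl fun j _ => by rw [mul_sum]; exact sum_congr rfl fun k _ => by ring
    _ = _ := by
        rw [sum_comm, sum_product]
        refine sum_congr rfl fun j _ => sum_congr rfl fun k _ => ?_
        rw [sum_product, sum_mul, sum_mul]
        exact sum_congr rfl fun m _ => by rw [sum_mul, sum_mul]

lemma Acoef_one_zero_add (z X : ℂ) :
    Acoef d a 1 0 (z + X) = ∑ j ∈ range (d + 1), ∑ k ∈ range (d + 1),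
      Acoef d a j k z * j * X ^ (j - 1) * starRingEnd ℂ X ^ k := by
  have hleft : HasFDerivAt (fun Y => Acoef d a 0 0 (z + Y))
      (wirtingerCLM (Acoef d a 1 0 (z + X)) (Acoef d a 0 1 (z + X))) X := by
    refine ((hasFDerivAt_Acoef d a 0 0 (z + X)).comp X
      ((hasFDerivAt_id X).const_add z)).congr_fderiv ?_
    ext v; simp
  have hright := HasFDerivAt.fun_sum fun j (_ : j ∈ range (d + 1)) =>
    HasFDerivAt.fun_sum fun k (_ : k ∈ range (d + 1)) =>
      hasFDerivAt_monomial (Acoef d a j k z) j k X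
  simp only [wirtingerCLM_sum, ← funext (Acoef_zero_zero_add d a z)] at hright
  rw [← wDz_eq_of_hasFDerivAt hleft, wDz_eq_of_hasFDerivAt hright]

lemma hasFDerivAt_sum_Acoef_mul_sub_pow_left (w z : ℂ) :
    HasFDerivAt (fun ζ => ∑ j ∈ Icc 1 d, Acoef d a j 0 ζ * (w - ζ) ^ j)
      (wirtingerCLM (-Acoef d a 1 0 z) (∑ j ∈ Icc 1 d, Acoef d a j 1 z * (w - z) ^ j)) z := by
  have h := HasFDerivAt.fun_sum fun j (_ : j ∈ Icc 1 d) =>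
    (hasFDerivAt_Acoef d a j 0 z).mul_wirtingerCLM
      (((hasDerivAt_id' z).const_sub w).fun_pow j).hasFDerivAt_wirtingerCLM
  rw [wirtingerCLM_sum] at h
  refine h.congr_fderiv (congrArg₂ _ ?_ (sum_congr rfl fun j _ => by simp [mul_comm]))
  -- the `∂_z` parts telescope
  have htel := sum_Ico_sub (fun j => (j : ℂ) * Acoef d a j 0 z * (w - z) ^ (j - 1))
    (Nat.le_add_left 1 d)
  rw [Ico_add_one_right_eq_Icc, Acoef_eq_zero_of_lt d a (Nat.lt_succ_self d)] at htel
  simp only [Nat.add_sub_cancel, Nat.cast_add, Nat.cast_one, mul_zero, zero_mul, one_mul,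
    Nat.sub_self, pow_zero, mul_one, zero_sub] at htel
  rw [← htel]
  exact sum_congr rfl fun j _ => by ring

lemma hasFDerivAt_sum_Acoef_mul_sub_pow_right (w z : ℂ) :
    HasFDerivAt (fun ω => ∑ j ∈ Icc 1 d, Acoef d a j 0 z * (ω - z) ^ j)
      (wirtingerCLM (∑ j ∈ Icc 1 d, Acoef d a j 0 z * j * (w - z) ^ (j - 1)) 0) w := by
  refine (HasDerivAt.fun_sum fun j (_ : j ∈ Icc 1 d) =>
    (((hasDerivAt_id' w).sub_const z).fun_pow j).const_mul (Acoef d a j 0 z)).hasFDerivAt_wirtingerCLM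
    |>.congr_fderiv ?_
  simp only [mul_one, mul_assoc]

lemma Acoef_one_zero_eq (w z : ℂ) :
    Acoef d a 1 0 w = ∑ j ∈ Icc 1 d, Acoef d a j 0 z * j * (w - z) ^ (j - 1) +
      ∑ j ∈ Icc 1 d, ∑ k ∈ Icc 1 d,
        Acoef d a j k z * j * (w - z) ^ (j - 1) * starRingEnd ℂ (w - z) ^ k := by
  have h := Acoef_one_zero_add d a z (w - z)
  rw [add_sub_cancel] at h
  simp [h, sum_range_succ_eq_add_sum_Icc, sum_add_distrib]

end Acoef

section VectorFields

variable (d : ℕ) (a : ℕ → ℕ → ℂ) (t : ℝ) (w z : ℂ)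

lemma hasFDerivAt_twist_left :
    HasFDerivAt (fun ζ => ((t + Twist d a w ζ : ℝ) : ℂ))
      (wirtingerCLM
        (I * (-Acoef d a 1 0 z - starRingEnd ℂ (∑ j ∈ Icc 1 d, Acoef d a j 1 z * (w - z) ^ j)))
        (I * (∑ j ∈ Icc 1 d, Acoef d a j 1 z * (w - z) ^ j - starRingEnd ℂ (-Acoef d a 1 0 z))))
      z :=
  (hasFDerivAt_sum_Acoef_mul_sub_pow_left d a w z).ofReal_add_neg_two_mul_im t

lemma hasFDerivAt_twist_right :
    HasFDerivAt (fun ω => ((t + Twist d a ω z : ℝ) : ℂ))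
      (wirtingerCLM (I * ∑ j ∈ Icc 1 d, Acoef d a j 0 z * j * (w - z) ^ (j - 1))
        (-(I * starRingEnd ℂ (∑ j ∈ Icc 1 d, Acoef d a j 0 z * j * (w - z) ^ (j - 1))))) w :=
  (hasFDerivAt_sum_Acoef_mul_sub_pow_right d a w z).ofReal_add_neg_two_mul_im t
    |>.congr_fderiv (by rw [map_zero, sub_zero, zero_sub, mul_neg])

lemma wDz_twist_left_add :
    wDz (fun ζ => ((t + Twist d a w ζ : ℝ) : ℂ)) z + I * Acoef d a 1 0 z =
      -I * starRingEnd ℂ (∑ j ∈ Icc 1 d, Acoef d a j 1 z * (w - z) ^ j) := by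
  rw [wDz_eq_of_hasFDerivAt (hasFDerivAt_twist_left d a t w z)]
  ring

lemma wDzbar_twist_left_sub (hsym : ∀ m n, starRingEnd ℂ (a m n) = a n m) :
    wDzbar (fun ζ => ((t + Twist d a w ζ : ℝ) : ℂ)) z - I * Acoef d a 0 1 z =
      I * ∑ j ∈ Icc 1 d, Acoef d a j 1 z * (w - z) ^ j := by
  rw [wDzbar_eq_of_hasFDerivAt (hasFDerivAt_twist_left d a t w z), map_neg, conj_Acoef d a hsym]
  ring

lemma wDz_twist_right_sub :
    wDz (fun ω => ((t + Twist d a ω z : ℝ) : ℂ)) w - I * Acoef d a 1 0 w =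
      -I * ∑ j ∈ Icc 1 d, ∑ k ∈ Icc 1 d,
        Acoef d a j k z * j * (w - z) ^ (j - 1) * starRingEnd ℂ (w - z) ^ k := by
  rw [wDz_eq_of_hasFDerivAt (hasFDerivAt_twist_right d a t w z), Acoef_one_zero_eq d a w z]
  ring

lemma wDzbar_twist_right_add (hsym : ∀ m n, starRingEnd ℂ (a m n) = a n m) :
    wDzbar (fun ω => ((t + Twist d a ω z : ℝ) : ℂ)) w + I * Acoef d a 0 1 w =
      I * starRingEnd ℂ (∑ j ∈ Icc 1 d, ∑ k ∈ Icc 1 d,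
        Acoef d a j k z * j * (w - z) ^ (j - 1) * starRingEnd ℂ (w - z) ^ k) := by
  rw [wDzbar_eq_of_hasFDerivAt (hasFDerivAt_twist_right d a t w z), ← conj_Acoef d a hsym,
    Acoef_one_zero_eq d a w z, map_add]
  ring

end VectorFields

section Bounds

variable (d : ℕ) (a : ℕ → ℕ → ℂ) (z : ℂ) {δ : ℝ}

lemma muF_nonneg (s : ℝ) : 0 ≤ muF d a z s :=
  Real.sInf_nonneg (by rintro x ⟨j, k, -, -, -, rfl⟩; positivity)

lemma norm_sub_le_dNI (w : ℂ) (t : ℝ) : ‖w - z‖ ≤ dNI d a z w t := by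
  rw [dNI, norm_sub_rev]
  linarith [muF_nonneg d a z (t + Twist d a w z)]

lemma dNI_pos {w : ℂ} (hzw : z ≠ w) (t : ℝ) : 0 < dNI d a z w t :=
  add_pos_of_pos_of_nonneg (norm_pos_iff.2 (sub_ne_zero.2 hzw)) (muF_nonneg d a z _)

lemma Lam_nonneg (hδ : 0 ≤ δ) : 0 ≤ Lam d a z δ :=
  sum_nonneg fun _ _ => sum_nonneg fun _ _ => by positivity

lemma norm_sum_Acoef_mul_pow_le (hδ : 0 < δ) {X : ℂ} (hX : ‖X‖ ≤ δ) :
    ‖∑ j ∈ Icc 1 d, Acoef d a j 1 z * X ^ j‖ ≤ Lam d a z δ / δ := by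
  calc ‖∑ j ∈ Icc 1 d, Acoef d a j 1 z * X ^ j‖
      ≤ ∑ j ∈ Icc 1 d, ‖Acoef d a j 1 z‖ * δ ^ (j + 1) / δ := by
        refine norm_sum_le_of_le _ fun j _ => ?_
        rw [norm_mul, norm_pow, pow_succ, mul_div_assoc, mul_div_cancel_right₀ _ hδ.ne']
        gcongr
    _ ≤ Lam d a z δ / δ := by
        rw [← sum_div, Lam]
        gcongr with j hj
        have h1 : 1 ∈ Icc 1 d := mem_Icc.2 ⟨le_rfl, (mem_Icc.1 hj).1.trans (mem_Icc.1 hj).2⟩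
        exact single_le_sum (f := fun k => ‖Acoef d a j k z‖ * δ ^ (j + k))
          (fun _ _ => by positivity) h1

lemma norm_sum_sum_Acoef_le (hδ : 0 < δ) {X : ℂ} (hX : ‖X‖ ≤ δ) :
    ‖∑ j ∈ Icc 1 d, ∑ k ∈ Icc 1 d, Acoef d a j k z * j * X ^ (j - 1) * starRingEnd ℂ X ^ k‖
      ≤ d * Lam d a z δ / δ := by
  calc _ ≤ ∑ j ∈ Icc 1 d, ∑ k ∈ Icc 1 d, d * ‖Acoef d a j k z‖ * (δ ^ (j + k) / δ) := by
        refine norm_sum_le_of_le _ fun j hj => norm_sum_le_of_le _ fun k _ => ?_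
        obtain ⟨hj1, hjd⟩ := mem_Icc.1 hj
        rw [show j + k = j - 1 + k + 1 by omega, pow_succ, mul_div_cancel_right₀ _ hδ.ne', pow_add]
        simp only [norm_mul, norm_pow, norm_natCast, Complex.norm_conj]
        calc _ = (j : ℝ) * ‖Acoef d a j k z‖ * (‖X‖ ^ (j - 1) * ‖X‖ ^ k) := by ring
          _ ≤ d * ‖Acoef d a j k z‖ * (δ ^ (j - 1) * δ ^ k) := by gcongr
    _ = d * Lam d a z δ / δ := by
        rw [Lam, mul_sum, sum_div]
        refine sum_congr rfl fun j _ => ?_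
        rw [mul_sum, sum_div]
        exact sum_congr rfl fun k _ => by ring

end Bounds

/-- For a subharmonic, nonharmonic polynomial `p` of degree `d`, each of the four
vector fields `L_z, L̄_z, 𝓛_w, 𝓛̄_w` applied to `t + T(w,z)` is bounded by
`C Λ(z, d_{NI}(z,w,t)) / d_{NI}(z,w,t)` with `C` depending only on `d`. -/
theorem vector_fields_t_add_twist_bound (d : ℕ) :
    ∃ C : ℝ, 0 < C ∧
      ∀ a : ℕ → ℕ → ℂ,
        (∀ m n, d < m + n → a m n = 0) →
        (∀ m n, (starRingEnd ℂ) (a m n) = a n m) →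
        (∀ z : ℂ, 0 ≤ (Acoef d a 1 1 z).re) →
        (∃ z₀ : ℂ, Acoef d a 1 1 z₀ ≠ 0) →
        ∀ (z w : ℂ) (t : ℝ), z ≠ w →
          Norm.norm (wDz (fun ζ => ((t + Twist d a w ζ : ℝ) : ℂ)) z
              + Complex.I * Acoef d a 1 0 z
                * deriv (fun s : ℝ => ((s + Twist d a w z : ℝ) : ℂ)) t)
            ≤ C * Lam d a z (dNI d a z w t) / dNI d a z w t ∧
          Norm.norm (wDzbar (fun ζ => ((t + Twist d a w ζ : ℝ) : ℂ)) z
              - Complex.I * Acoef d a 0 1 z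
                * deriv (fun s : ℝ => ((s + Twist d a w z : ℝ) : ℂ)) t)
            ≤ C * Lam d a z (dNI d a z w t) / dNI d a z w t ∧
          Norm.norm (wDz (fun ω => ((t + Twist d a ω z : ℝ) : ℂ)) w
              - Complex.I * Acoef d a 1 0 w
                * deriv (fun s : ℝ => ((s + Twist d a w z : ℝ) : ℂ)) t)
            ≤ C * Lam d a z (dNI d a z w t) / dNI d a z w t ∧
          Norm.norm (wDzbar (fun ω => ((t + Twist d a ω z : ℝ) : ℂ)) w
              + Complex.I * Acoef d a 0 1 w
                * deriv (fun s : ℝ => ((s + Twist d a w z : ℝ) : ℂ)) t)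
            ≤ C * Lam d a z (dNI d a z w t) / dNI d a z w t := by
  refine ⟨d + 1, by positivity, fun a _ hsym _ _ z w t hzw => ?_⟩
  set δ := dNI d a z w t
  have hδ : 0 < δ := dNI_pos d a z hzw t
  have hcol := norm_sum_Acoef_mul_pow_le d a z hδ (norm_sub_le_dNI d a z w t)
  have hdbl := norm_sum_sum_Acoef_le d a z hδ (norm_sub_le_dNI d a z w t)
  have hΛ : 0 ≤ Lam d a z δ / δ := div_nonneg (Lam_nonneg d a z hδ.le) hδ.le
  have hle : Lam d a z δ / δ ≤ (d + 1) * (Lam d a z δ / δ) :=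
    le_mul_of_one_le_left hΛ (by linarith [d.cast_nonneg (α := ℝ)])
  have hle' : d * (Lam d a z δ / δ) ≤ (d + 1) * (Lam d a z δ / δ) := by gcongr; linarith
  simp only [deriv_ofReal_add_const, mul_one, wDz_twist_left_add,
    wDzbar_twist_left_sub d a t w z hsym, wDz_twist_right_sub, wDzbar_twist_right_add d a t w z hsym,
    norm_mul, norm_neg, norm_I, one_mul, Complex.norm_conj, mul_div_assoc]
  rw [mul_div_assoc] at hdbl
  refine ⟨?_, ?_, ?_, ?_⟩ <;> linarith
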